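/- arXiv:2011.00868 — 6 statements merged into one kernel-verified Lean document; each statement's English description precedes it below -/
import Mathlib

section
/- Let n, c' be positive integers and 0 < ξ ≤ 1/(2c'^2). Any family of subsets of [n], in which every subset has size at least n/c' and every pair of distinct subsets shares at most ξ·n elements, has size at most 2c'. -/
/-!
Among `2c' + 1` members of the family, the second Bonferroni inequality
`|⋃ Aᵢ| ≥ ∑ |Aᵢ| - ∑_{i<j} |Aᵢ ∩ Aⱼ|` bounds the union from below by
`(2c'+1)·n/c' - (2c'+1)c'·n/(2c'²) = (2c'+1)·n/(2c') > n`, which no subset of `[n]` can exceed.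
-/

open Finset

namespace Finset

variable {α : Type*} [DecidableEq α]

theorem sum_offDiag_card_inter_insert {A : Finset α} {G : Finset (Finset α)} (hA : A ∉ G) :
    ∑ p ∈ (insert A G).offDiag, #(p.1 ∩ p.2) =
      ∑ p ∈ G.offDiag, #(p.1 ∩ p.2) + 2 * ∑ B ∈ G, #(A ∩ B) := by
  rw [offDiag_insert hA, sum_union, sum_union, singleton_product, product_singleton,
    sum_map, sum_map]
  · simp only [Function.Embedding.coeFn_mk, inter_comm _ A]
    ring
  all_goals
    simp only [disjoint_left, mem_union, mem_offDiag, mem_product, mem_singleton]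
    grind

theorem two_mul_sum_card_le_card_biUnion_add (G : Finset (Finset α)) :
    2 * ∑ A ∈ G, #A ≤ 2 * #(G.biUnion id) + ∑ p ∈ G.offDiag, #(p.1 ∩ p.2) := by
  induction G using Finset.induction_on with
  | empty => simp
  | @insert A G hA ih =>
    rw [sum_insert hA, sum_offDiag_card_inter_insert hA, biUnion_insert, id]
    have hcap : #(A ∩ G.biUnion id) ≤ ∑ B ∈ G, #(A ∩ B) := by
      rw [inter_biUnion]
      exact card_biUnion_le
    have := card_union_add_card_inter A (G.biUnion id)
    omega

theorem card_mul_le_card_biUnion_add_of_card_inter_le {G : Finset (Finset α)} {s t : ℝ}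
    (hs : ∀ A ∈ G, s ≤ #A) (ht : ∀ A ∈ G, ∀ B ∈ G, A ≠ B → #(A ∩ B) ≤ t) :
    #G * s ≤ #(G.biUnion id) + #G * (#G - 1) / 2 * t := by
  have hsum : #G * s ≤ ∑ A ∈ G, (#A : ℝ) := by
    simpa using card_nsmul_le_sum G (fun A ↦ (#A : ℝ)) s hs
  have hpairs : ∑ p ∈ G.offDiag, (#(p.1 ∩ p.2) : ℝ) ≤ #G * (#G - 1) * t := by
    have := sum_le_card_nsmul G.offDiag (fun p ↦ (#(p.1 ∩ p.2) : ℝ)) t fun p hp ↦ by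
      obtain ⟨hp1, hp2, hne⟩ := mem_offDiag.1 hp
      exact ht _ hp1 _ hp2 hne
    rw [offDiag_card, nsmul_eq_mul, Nat.cast_sub (Nat.le_mul_self _)] at this
    push_cast at this
    linarith
  have hbonferroni :
      2 * ∑ A ∈ G, (#A : ℝ) ≤ 2 * #(G.biUnion id) + ∑ p ∈ G.offDiag, (#(p.1 ∩ p.2) : ℝ) := by
    exact_mod_cast two_mul_sum_card_le_card_biUnion_add G
  linarith

end Finset

theorem intersecting_family_bound_general (n c' : ℕ) (hn : 0 < n) (hc : 0 < c')
    (ξ : ℝ) (hξ : ξ ≤ 1 / (2 * (c' : ℝ) ^ 2))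
    (F : Finset (Finset (Fin n)))
    (hsize : ∀ A ∈ F, (n : ℝ) / (c' : ℝ) ≤ (A.card : ℝ))
    (hint : ∀ A ∈ F, ∀ B ∈ F, A ≠ B → ((A ∩ B).card : ℝ) ≤ ξ * n) :
    F.card ≤ 2 * c' := by
  by_contra! hF
  obtain ⟨G, hGF, hG⟩ := exists_subset_card_eq (s := F) (n := 2 * c' + 1) hF
  have hbound := card_mul_le_card_biUnion_add_of_card_inter_le (fun A hA ↦ hsize A (hGF hA))
    fun A hA B hB ↦ hint A (hGF hA) B (hGF hB)
  have hunion : (#(G.biUnion id) : ℝ) ≤ n := by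
    exact_mod_cast (card_le_univ _).trans_eq (Fintype.card_fin n)
  rw [hG] at hbound
  push_cast at hbound
  rw [add_sub_cancel_right] at hbound
  have hc' : (0 : ℝ) < c' := by exact_mod_cast hc
  have hn' : (0 : ℝ) < n := by exact_mod_cast hn
  have hξn : ξ * n ≤ n / (2 * c' ^ 2) := by
    rw [div_eq_mul_one_div, mul_comm]; gcongr
  have hpairs : (2 * c' + 1 : ℝ) * (2 * c') / 2 * (ξ * n) ≤ (2 * c' + 1) * (n / c') / 2 :=
    calc _ ≤ (2 * c' + 1 : ℝ) * (2 * c') / 2 * (n / (2 * c' ^ 2)) := by gcongr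
      _ = _ := by field_simp
  have hsizes : (2 * c' + 1 : ℝ) * (n / c') = 2 * n + n / c' := by field_simp
  linarith [show 0 < (n : ℝ) / c' by positivity]

/-- Any family of subsets of `[n]`, each of size at least `n/c'`, with pairwise
intersections of distinct members of size at most `ξ·n` where `0 < ξ ≤ 1/(2c'²)`,
has at most `2c'` members. -/
theorem intersecting_family_bound (n c' : ℕ) (hn : 0 < n) (hc : 0 < c')
    (ξ : ℝ) (hξ0 : 0 < ξ) (hξ : ξ ≤ 1 / (2 * (c' : ℝ) ^ 2))
    (F : Finset (Finset (Fin n)))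
    (hsize : ∀ A ∈ F, (n : ℝ) / (c' : ℝ) ≤ (A.card : ℝ))
    (hint : ∀ A ∈ F, ∀ B ∈ F, A ≠ B → ((A ∩ B).card : ℝ) ≤ ξ * n) :
    F.card ≤ 2 * c' :=
  intersecting_family_bound_general n c' hn hc ξ hξ F hsize hint
end

section
/- Let x and y be permutations of [n] (strings of length n with distinct symbols), and suppose in some fixed optimal alignment of each with a reference permutation z, I_x and I_y denote the sets of symbols of z not aligned (so |I_x| equals the Ulam distance d(x,z) and |I_y| = d(y,z)). Then d(x, y) ≤ |I_x| + |I_y| − |I_x ∩ I_y|. -/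
open List

section UlamDefs
variable {α : Type*}

def moveStep (x y : List α) : Prop :=
  ∃ (a : α) (u v w z : List α), x = u ++ a :: v ∧ u ++ v = w ++ z ∧ y = w ++ a :: z

def movesTo : ℕ → List α → List α → Prop
  | 0, x, y => x = y
  | k+1, x, y => ∃ z, moveStep x z ∧ movesTo k z y

noncomputable def ulamDist (x y : List α) : ℕ := sInf {k | movesTo k x y}

def editStep (x y : List α) : Prop :=
  (∃ (a : α) (u v : List α), x = u ++ v ∧ y = u ++ a :: v) ∨
  (∃ (a : α) (u v : List α), x = u ++ a :: v ∧ y = u ++ v)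

def editsTo : ℕ → List α → List α → Prop
  | 0, x, y => x = y
  | k+1, x, y => ∃ z, editStep x z ∧ editsTo k z y

noncomputable def editDist (x y : List α) : ℕ := sInf {k | editsTo k x y}

noncomputable def lcsLen (x y : List α) : ℕ :=
  sSup {k | ∃ l : List α, l.length = k ∧ l.Sublist x ∧ l.Sublist y}

end UlamDefs

/-!
Moving one symbol `a` of `x` that lies outside a common subsequence `w` of `x` and `y` to the
position it has in `y` relative to `w` enlarges the common subsequence by one. Starting from the
symbols of `z` aligned in both alignments, `|I_x ∪ I_y|` such moves turn `x` into `y`, and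
`|I_x ∪ I_y| = |I_x| + |I_y| - |I_x ∩ I_y|`.
-/

theorem exists_mem_not_mem_of_length_lt {α : Type*} {x w : List α} (hx : x.Nodup)
    (hlt : w.length < x.length) : ∃ a ∈ x, a ∉ w := by
  by_contra! h
  exact absurd (hx.subperm h).length_le (not_le.2 hlt)

section Moves
variable {α : Type*} [DecidableEq α]

theorem exists_moveStep_extending_sublist {x y w : List α} {a : α}
    (hax : a ∈ x) (hay : a ∈ y) (haw : a ∉ w) (hwx : w <+ x) (hwy : w <+ y) :
    ∃ x', moveStep x x' ∧ x' ~ x ∧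
      ∃ w', w' <+ x' ∧ w' <+ y ∧ w'.length = w.length + 1 := by
  obtain ⟨p, q, -, hx, hxa⟩ := exists_erase_eq hax
  obtain ⟨u, v, -, hy, hya⟩ := exists_erase_eq hay
  have hwx' : w <+ p ++ q := hxa ▸ erase_of_not_mem haw ▸ hwx.erase a
  have hwy' : w <+ u ++ v := hya ▸ erase_of_not_mem haw ▸ hwy.erase a
  obtain ⟨w₁, w₂, rfl, hw₁u, hw₂v⟩ := sublist_append_iff.1 hwy'
  obtain ⟨l₁, l₂, hl, hw₁l₁, hw₂l₂⟩ := append_sublist_iff.1 hwx'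
  refine ⟨l₁ ++ a :: l₂, ⟨a, p, q, l₁, l₂, hx, hl, rfl⟩, ?_, w₁ ++ a :: w₂,
    hw₁l₁.append (hw₂l₂.cons_cons a), hy ▸ hw₁u.append (hw₂v.cons_cons a), by simp; omega⟩
  calc l₁ ++ a :: l₂ ~ a :: (p ++ q) := hl ▸ perm_middle
    _ ~ x := hx ▸ perm_middle.symm

theorem movesTo_of_sublist {x y w : List α} (hx : x.Nodup) (hxy : x ~ y)
    (hwx : w <+ x) (hwy : w <+ y) : movesTo (x.length - w.length) x y := by
  induction hk : x.length - w.length generalizing x w with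
  | zero =>
    have hlen : w.length = x.length := le_antisymm hwx.length_le (by omega)
    show x = y
    rw [← hwx.eq_of_length hlen, hwy.eq_of_length (hlen.trans hxy.length_eq)]
  | succ k ih =>
    obtain ⟨a, hax, haw⟩ := exists_mem_not_mem_of_length_lt (w := w) hx (by omega)
    obtain ⟨x', hstep, hx'x, w', hw'x', hw'y, hlen⟩ :=
      exists_moveStep_extending_sublist hax (hxy.mem_iff.1 hax) haw hwx hwy
    exact ⟨x', hstep, ih (hx'x.nodup_iff.2 hx) (hx'x.trans hxy) hw'x' hw'y
      (by rw [hx'x.length_eq, hlen]; omega)⟩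

theorem ulamDist_le_of_sublist {x y w : List α} (hx : x.Nodup) (hxy : x ~ y)
    (hwx : w <+ x) (hwy : w <+ y) : ulamDist x y ≤ x.length - w.length :=
  Nat.sInf_le (movesTo_of_sublist hx hxy hwx hwy)

end Moves

theorem length_filter_not_mem_of_perm_finRange {n : ℕ} {z : List (Fin n)}
    (hz : z ~ finRange n) (s : Finset (Fin n)) :
    (z.filter (fun a => a ∉ s)).length = n - s.card := by
  have hcompl : (z.filter (fun a => a ∉ s)).toFinset = sᶜ := by
    ext a
    simp [hz.mem_iff]
  rw [← toFinset_card_of_nodup ((hz.nodup_iff.2 (nodup_finRange n)).filter _), hcompl,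
    Finset.card_compl, Fintype.card_fin]

theorem ulam_dist_via_unaligned_general (n : ℕ) (x y z : List (Fin n))
    (hx : x ~ List.finRange n) (hy : y ~ List.finRange n) (hz : z ~ List.finRange n)
    (Ix Iy : Finset (Fin n))
    (hax : (z.filter (fun a => a ∉ Ix)).Sublist x)
    (hay : (z.filter (fun a => a ∉ Iy)).Sublist y) :
    ulamDist x y ≤ Ix.card + Iy.card - (Ix ∩ Iy).card := by
  set w := z.filter (fun a => a ∉ Ix ∪ Iy)
  have hwx : w <+ x := (monotone_filter_right z fun a => by simp_all).trans hax
  have hwy : w <+ y := (monotone_filter_right z fun a => by simp_all).trans hay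
  have hbound := ulamDist_le_of_sublist (hx.nodup_iff.2 (nodup_finRange n))
    (hx.trans hy.symm) hwx hwy
  rw [length_filter_not_mem_of_perm_finRange hz, hx.length_eq, length_finRange] at hbound
  have hunion : (Ix ∪ Iy).card ≤ n := by simpa using Finset.card_le_univ (Ix ∪ Iy)
  rw [← Finset.card_union]
  omega

/-- If `I_x`, `I_y` are the sets of symbols of a reference permutation `z` not aligned
in fixed optimal alignments of `x` resp. `y` with `z` (so the aligned symbols form common
subsequences and `|I_x| = d(x,z)`, `|I_y| = d(y,z)`), then
`d(x,y) ≤ |I_x| + |I_y| − |I_x ∩ I_y|`. -/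
theorem ulam_dist_via_unaligned (n : ℕ) (x y z : List (Fin n))
    (hx : x ~ List.finRange n) (hy : y ~ List.finRange n) (hz : z ~ List.finRange n)
    (Ix Iy : Finset (Fin n))
    (hax : (z.filter (fun a => a ∉ Ix)).Sublist x)
    (hay : (z.filter (fun a => a ∉ Iy)).Sublist y)
    (hcx : Ix.card = ulamDist x z) (hcy : Iy.card = ulamDist y z) :
    ulamDist x y ≤ Ix.card + Iy.card - (Ix ∩ Iy).card :=
  ulam_dist_via_unaligned_general n x y z hx hy hz Ix Iy hax hay
end

section
/- In the directed 'alignment' graph H on vertex set [n] built from a set S of m permutations with parameter 0 < α ≤ 1/10 — where (i,j) ∈ E(H) iff i appears before j in at least (1−2α)m permutations of S — any two 'good' symbols i, j (each unaligned in at most αm of the fixed optimal alignments with a median x_med) are joined by at least one of the directed edges (i,j) or (j,i). -/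
open List

/-!
Both `i` and `j` are aligned with the median in all but at most `2αm` of the permutations. The
median lists `i` and `j` in some order, and each alignment `g_x` is an order-preserving embedding
of the aligned part of `x_med` into `x`, so every permutation aligning both of them lists them in
that same order.
-/

namespace List

variable {β : Type*} {a b : β} {l : List β}

theorem pair_sublist_or_pair_sublist (hab : a ≠ b) (ha : a ∈ l) (hb : b ∈ l) :
    [a, b] <+ l ∨ [b, a] <+ l := by
  obtain ⟨s, t, rfl⟩ := append_of_mem ha
  rcases mem_append.1 hb with hbs | hbt
  · exact Or.inr ((singleton_sublist.2 hbs).append (singleton_sublist.2 mem_cons_self))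
  · have hbt : b ∈ t := (mem_cons.1 hbt).resolve_left (Ne.symm hab)
    exact Or.inl (((singleton_sublist.2 hbt).cons_cons a).trans (sublist_append_right s _))

theorem Sublist.sublist_filter_of_forall {l' : List β} (h : l' <+ l) {p : β → Bool}
    (hp : ∀ c ∈ l', p c) : l' <+ l.filter p := by
  simpa only [filter_eq_self.2 hp] using h.filter p

theorem Nodup.idxOf_lt_idxOf_of_pair_sublist [DecidableEq β] (hl : l.Nodup) (h : [a, b] <+ l) :
    l.idxOf a < l.idxOf b := by
  obtain ⟨r₁, r₂, rfl, ha, hb⟩ := cons_sublist_iff.1 h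
  have hb₁ : b ∉ r₁ := fun hb₁ => disjoint_of_nodup_append hl hb₁ (singleton_sublist.1 hb)
  rw [idxOf_append_of_mem ha, idxOf_append_of_notMem hb₁]
  exact (idxOf_lt_length_of_mem ha).trans_le (Nat.le_add_right _ _)

end List

namespace Finset

theorem card_sub_card_filter_sub_card_filter_le {ι : Type*} [Fintype ι]
    (p q : ι → Prop) [DecidablePred p] [DecidablePred q] :
    (Fintype.card ι : ℝ) - #{k | p k} - #{k | q k} ≤ #{k | ¬p k ∧ ¬q k} := by
  classical
  have hcover : univ ⊆ univ.filter p ∪ univ.filter q ∪ univ.filter (fun k => ¬p k ∧ ¬q k) := by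
    intro k _
    simp only [mem_union, mem_filter, mem_univ, true_and]
    tauto
  have : Fintype.card ι ≤ #{k | p k} + #{k | q k} + #{k | ¬p k ∧ ¬q k} :=
    (card_le_card hcover).trans <| (card_union_le _ _).trans <|
      Nat.add_le_add_right (card_union_le _ _) _
  have : (Fintype.card ι : ℝ) ≤ #{k | p k} + #{k | q k} + #{k | ¬p k ∧ ¬q k} := by
    exact_mod_cast this
  linarith

end Finset

theorem good_symbols_have_edge_general (n m : ℕ) (α : ℝ)
    (x : Fin m → List (Fin n)) (hx : ∀ k, x k ~ List.finRange n)
    (xmed : List (Fin n)) (hmed : xmed ~ List.finRange n)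
    (U : Fin m → Finset (Fin n))
    (halign : ∀ k, (xmed.filter (fun a => a ∉ U k)).Sublist (x k))
    (i j : Fin n) (hij : i ≠ j)
    (hgi : ((Finset.univ.filter (fun k => i ∈ U k)).card : ℝ) ≤ α * m)
    (hgj : ((Finset.univ.filter (fun k => j ∈ U k)).card : ℝ) ≤ α * m) :
    (1 - 2 * α) * m ≤
        ((Finset.univ.filter (fun k => (x k).idxOf i < (x k).idxOf j)).card : ℝ) ∨
    (1 - 2 * α) * m ≤
        ((Finset.univ.filter (fun k => (x k).idxOf j < (x k).idxOf i)).card : ℝ) := by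
  have hboth : (1 - 2 * α) * m ≤ (Finset.univ.filter (fun k => i ∉ U k ∧ j ∉ U k)).card := by
    have := Finset.card_sub_card_filter_sub_card_filter_le (fun k => i ∈ U k) (fun k => j ∈ U k)
    rw [Fintype.card_fin] at this
    linarith
  have hpreserved {a b : Fin n} (hab : [a, b] <+ xmed) (k : Fin m) (ha : a ∉ U k) (hb : b ∉ U k) :
      (x k).idxOf a < (x k).idxOf b :=
    ((hx k).nodup_iff.2 (List.nodup_finRange n)).idxOf_lt_idxOf_of_pair_sublist <|
      (hab.sublist_filter_of_forall (p := fun c => c ∉ U k) (by simp [ha, hb])).trans (halign k)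
  have hmem (a : Fin n) : a ∈ xmed := hmed.mem_iff.2 (List.mem_finRange a)
  rcases List.pair_sublist_or_pair_sublist hij (hmem i) (hmem j) with hij' | hji'
  · refine Or.inl (hboth.trans (Nat.cast_le.2 (Finset.card_le_card ?_)))
    exact Finset.monotone_filter_right _ fun k _ hk => hpreserved hij' k hk.1 hk.2
  · refine Or.inr (hboth.trans (Nat.cast_le.2 (Finset.card_le_card ?_)))
    exact Finset.monotone_filter_right _ fun k _ hk => hpreserved hji' k hk.2 hk.1

/-- In the alignment graph on `[n]` built from `m` permutations (edge `(i,j)` iff `i`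
precedes `j` in at least `(1−2α)m` of them), any two distinct good symbols — each
unaligned with the median in at most `αm` of the fixed optimal alignments — are joined
by a directed edge in at least one direction. -/
theorem good_symbols_have_edge (n m : ℕ) (α : ℝ) (hα0 : 0 < α) (hα : α ≤ 1 / 10)
    (x : Fin m → List (Fin n)) (hx : ∀ k, x k ~ List.finRange n)
    (xmed : List (Fin n)) (hmed : xmed ~ List.finRange n)
    (U : Fin m → Finset (Fin n))
    (halign : ∀ k, (xmed.filter (fun a => a ∉ U k)).Sublist (x k))
    (i j : Fin n) (hij : i ≠ j)
    (hgi : ((Finset.univ.filter (fun k => i ∈ U k)).card : ℝ) ≤ α * m)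
    (hgj : ((Finset.univ.filter (fun k => j ∈ U k)).card : ℝ) ≤ α * m) :
    (1 - 2 * α) * m ≤
        ((Finset.univ.filter (fun k => (x k).idxOf i < (x k).idxOf j)).card : ℝ) ∨
    (1 - 2 * α) * m ≤
        ((Finset.univ.filter (fun k => (x k).idxOf j < (x k).idxOf i)).card : ℝ) :=
  good_symbols_have_edge_general n m α x hx xmed hmed U halign i j hij hgi hgj
end

section
/- Let H be a directed graph on [n] in which an edge (i,j) is present only if i precedes j in at least a (1−2α) fraction of the m permutations in S, where 0 < α ≤ 1/10. Then every directed cycle in any subgraph of H (obtained by vertex deletions) has length at least 1/(2α). -/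
/-!
Going once around the cycle `c`, no ranking can place every `c t` strictly before `c (t + 1)`,
so each of the `m` permutations violates at least one of the `L` edges. Each edge is violated by
at most `2αm` permutations, hence `m ≤ L · 2αm`, i.e. `2αL ≥ 1`.
-/

open Finset

theorem Fin.exists_not_lt_apply_add_one {β : Type*} [Preorder β] {L : ℕ} [NeZero L]
    (f : Fin L → β) : ∃ t, ¬ f t < f (t + 1) := by
  by_contra! hlt
  open Fin.NatCast in
  have hmono : StrictMono fun i : ℕ => f i := strictMono_nat_of_lt_succ fun i => by
    simpa only [Nat.cast_succ] using hlt i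
  -- the chain `f 0 < f 1 < ⋯ < f L` closes up, since `(L : Fin L) = 0`
  open Fin.NatCast in
  simpa only [Nat.cast_zero, Fin.natCast_self, lt_self_iff_false] using
    hmono (Nat.pos_of_neZero L)

section UnionBound

variable {ι κ : Type*} [Fintype ι] [Fintype κ]

theorem card_le_sum_card_filter_not (P : ι → κ → Prop) [∀ t k, Decidable (P t k)]
    (hviol : ∀ k, ∃ t, ¬ P t k) :
    Fintype.card κ ≤ ∑ t, #{k | ¬ P t k} := by
  classical
  calc Fintype.card κ = #(univ.biUnion fun t => ({k | ¬ P t k} : Finset κ)) := by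
        rw [eq_comm, card_eq_iff_eq_univ, eq_univ_iff_forall]
        simpa only [mem_biUnion, mem_univ, mem_filter, true_and] using hviol
    _ ≤ ∑ t, #{k | ¬ P t k} := card_biUnion_le

theorem one_le_mul_card_of_forall_exists_not (P : ι → κ → Prop) [∀ t k, Decidable (P t k)]
    [Nonempty κ] {ε : ℝ} (hviol : ∀ k, ∃ t, ¬ P t k)
    (hfreq : ∀ t, (1 - ε) * Fintype.card κ ≤ #{k | P t k}) :
    1 ≤ ε * Fintype.card ι := by
  have hm : (0 : ℝ) < Fintype.card κ := by exact_mod_cast Fintype.card_pos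
  have hrare : ∀ t, (#{k | ¬ P t k} : ℝ) ≤ ε * Fintype.card κ := fun t => by
    have hsplit := card_filter_add_card_filter_not (s := univ) (P t)
    rw [card_univ] at hsplit
    have := hfreq t
    rw [← hsplit, Nat.cast_add] at this ⊢
    linarith
  have hcount : (Fintype.card κ : ℝ) ≤ Fintype.card ι * (ε * Fintype.card κ) :=
    calc (Fintype.card κ : ℝ) ≤ ∑ t, (#{k | ¬ P t k} : ℝ) := by
          exact_mod_cast card_le_sum_card_filter_not P hviol
      _ ≤ ∑ _t : ι, ε * Fintype.card κ := sum_le_sum fun t _ => hrare t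
      _ = Fintype.card ι * (ε * Fintype.card κ) := by rw [sum_const, card_univ, nsmul_eq_mul]
  nlinarith

end UnionBound

open List

theorem cycle_length_lower_bound_general (n m : ℕ) (hm : 0 < m)
    (α : ℝ)
    (x : Fin m → List (Fin n))
    (L : ℕ) [NeZero L] (c : Fin L → Fin n)
    (hcyc : ∀ t : Fin L, (1 - 2 * α) * m ≤
      ((Finset.univ.filter
        (fun k => (x k).idxOf (c t) < (x k).idxOf (c (t + 1)))).card : ℝ)) :
    1 / (2 * α) ≤ (L : ℝ) := by
  have : NeZero m := ⟨hm.ne'⟩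
  have hviol : ∀ k, ∃ t : Fin L, ¬ (x k).idxOf (c t) < (x k).idxOf (c (t + 1)) := fun k =>
    Fin.exists_not_lt_apply_add_one fun t => (x k).idxOf (c t)
  have hone : 1 ≤ 2 * α * L := by
    simpa only [Fintype.card_fin] using
      one_le_mul_card_of_forall_exists_not
        (fun t k => (x k).idxOf (c t) < (x k).idxOf (c (t + 1))) hviol
        (by simpa only [Fintype.card_fin] using hcyc)
  have hα : 0 < 2 * α := pos_of_mul_pos_left (one_pos.trans_le hone) L.cast_nonneg
  rw [div_le_iff₀ hα]
  linarith

/-- Every directed cycle (closed walk `c : Fin L → [n]`) in the alignment graph —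
where an edge `(i,j)` requires `i` to precede `j` in at least a `(1−2α)` fraction of
the `m` permutations — has length at least `1/(2α)`. This also covers any subgraph
obtained by vertex deletions, since its cycles are cycles of the original graph. -/
theorem cycle_length_lower_bound (n m : ℕ) (hm : 0 < m)
    (α : ℝ) (hα0 : 0 < α) (hα : α ≤ 1 / 10)
    (x : Fin m → List (Fin n)) (hx : ∀ k, x k ~ List.finRange n)
    (L : ℕ) [NeZero L] (c : Fin L → Fin n)
    (hcyc : ∀ t : Fin L, (1 - 2 * α) * m ≤
      ((Finset.univ.filter
        (fun k => (x k).idxOf (c t) < (x k).idxOf (c (t + 1)))).card : ℝ)) :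
    1 / (2 * α) ≤ (L : ℝ) :=
  cycle_length_lower_bound_general n m hm α x L c hcyc
end

section
/- In the iterative shortest-cycle-deletion process on the alignment graph H (with parameter 0 < α ≤ 1/10), every deleted minimum-length cycle contains at most two good vertices. Consequently, if Ḡ is the set of bad symbols, the total number of good vertices deleted over all iterations is at most (4α/(1−4α))·|Ḡ|. -/
open List

/-- A directed cycle of a relation `E`: a nonempty list of distinct vertices chained by
`E`, with an `E`-edge from the last vertex back to the first. -/
def IsCycle {n : ℕ} (E : Fin n → Fin n → Prop) (C : List (Fin n)) : Prop :=
  C ≠ [] ∧ C.Nodup ∧ C.Chain' E ∧ ∀ h : C ≠ [], E (C.getLast h) (C.head h)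

/-- The alignment-graph edge relation: `(i,j)` is an edge iff `i` precedes `j` in at
least `(1−2α)m` of the `m` permutations. -/
def edgeRel (n m : ℕ) (α : ℝ) (x : Fin m → List (Fin n)) (i j : Fin n) : Prop :=
  (1 - 2 * α) * m ≤
    ((Finset.univ.filter (fun k => (x k).idxOf i < (x k).idxOf j)).card : ℝ)

/-!
Two good symbols are both aligned, hence ordered as in the median, in all but at most `2αm`
permutations, so `H` orients every pair of good vertices along the median order. On a shortest
cycle every chord is a cycle edge, so all good vertices of a deleted cycle except the
median-first one equal its successor: at most two of them. A closed walk goes backwards at least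
once in every permutation while an edge of `H` goes backwards in at most `2αm` of them, so a
cycle has length at least `1/(2α)` and hence at least `(1 - 4α)/(2α)` bad vertices. The deleted
cycles are disjoint, and summing the per-cycle ratio gives the bound.
-/

open scoped Finset

theorem List.pair_sublist_of_idxOf_lt {β : Type*} [DecidableEq β] {l : List β} {a b : β}
    (hb : b ∈ l) (h : l.idxOf a < l.idxOf b) : [a, b] <+ l := by
  induction l with
  | nil => simp at hb
  | cons c l ih =>
    by_cases hac : a = c
    · subst hac
      have hba : b ≠ a := by rintro rfl; exact h.false
      exact (singleton_sublist.2 ((mem_cons.1 hb).resolve_left hba)).cons_cons a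
    · have hbc : b ≠ c := by rintro rfl; simp at h
      rw [idxOf_cons_ne _ (Ne.symm hac), idxOf_cons_ne _ (Ne.symm hbc)] at h
      exact (ih ((mem_cons.1 hb).resolve_left hbc) (by omega)).cons c

theorem List.Nodup.idxOf_lt_idxOf_of_pair_sublist_s13 {β : Type*} [DecidableEq β] {l : List β}
    {a b : β} (hl : l.Nodup) (h : [a, b] <+ l) : l.idxOf a < l.idxOf b := by
  induction l with
  | nil => simp at h
  | cons c l ih =>
    obtain ⟨hcl, hl⟩ := nodup_cons.1 hl
    cases h with
    | cons _ h =>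
      have hca : c ≠ a := by rintro rfl; exact hcl (h.subset (by simp))
      have hcb : c ≠ b := by rintro rfl; exact hcl (h.subset (by simp))
      simpa [idxOf_cons_ne _ hca, idxOf_cons_ne _ hcb] using ih hl h
    | cons_cons _ h =>
      have hab : a ≠ b := by rintro rfl; exact hcl (h.subset (by simp))
      simp [idxOf_cons_ne _ hab]

theorem List.idxOf_lt_idxOf_of_filter_sublist {β : Type*} [DecidableEq β] {l l' : List β}
    {p : β → Prop} [DecidablePred p] (hl : l.Nodup) (h : l'.filter p <+ l) {a b : β}
    (hb : b ∈ l') (hab : l'.idxOf a < l'.idxOf b) (ha : p a) (hb' : p b) :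
    l.idxOf a < l.idxOf b := by
  refine hl.idxOf_lt_idxOf_of_pair_sublist_s13 (Sublist.trans ?_ h)
  simpa [ha, hb'] using (pair_sublist_of_idxOf_lt hb hab).filter p

theorem Finset.pairwiseDisjoint_range_of_eq_sdiff {β : Type*} [DecidableEq β] {V S : ℕ → Finset β}
    {T : ℕ} (hV : ∀ t, V (t + 1) = V t \ S t) (hS : ∀ t < T, S t ⊆ V t) :
    (Finset.range T : Set ℕ).PairwiseDisjoint S := by
  have hanti : Antitone V := antitone_nat_of_succ_le fun t => hV t ▸ Finset.sdiff_subset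
  have key : ∀ t₁ t₂, t₁ < t₂ → t₂ < T → Disjoint (S t₁) (S t₂) := fun t₁ t₂ h₁₂ h₂ =>
    Finset.disjoint_of_subset_right ((hS t₂ h₂).trans (hV t₁ ▸ hanti h₁₂))
      Finset.disjoint_sdiff
  intro t₁ h₁ t₂ h₂ hne
  simp only [Finset.coe_range, Set.mem_Iio] at h₁ h₂
  rcases hne.lt_or_gt with h | h
  · exact key t₁ t₂ h h₂
  · exact (key t₂ t₁ h h₁).symm

theorem Finset.sum_card_filter_le_of_pairwiseDisjoint {ι β : Type*} [Fintype β] [DecidableEq β]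
    {s : Finset ι} {S : ι → Finset β} (h : (s : Set ι).PairwiseDisjoint S) (p : β → Prop)
    [DecidablePred p] : ∑ i ∈ s, #((S i).filter p) ≤ #(Finset.univ.filter p) := by
  rw [← Finset.card_biUnion (h.mono fun i => Finset.filter_subset p (S i))]
  refine Finset.card_le_card fun a ha => ?_
  simp only [Finset.mem_biUnion, Finset.mem_filter] at ha
  obtain ⟨-, -, -, hpa⟩ := ha
  exact Finset.mem_filter.2 ⟨Finset.mem_univ a, hpa⟩

theorem Cycle.chain_coe_iff_forall₂_rotate {β : Type*} {r : β → β → Prop} (l : List β) :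
    Cycle.Chain r (l : Cycle β) ↔ Forall₂ r l (l.rotate 1) := by
  cases l with
  | nil => simp
  | cons a l =>
    rw [Cycle.chain_coe_cons, rotate_cons_succ, rotate_zero, ← cons_append,
      isChain_cons_append_singleton_iff_forall₂]

/-- A closed walk goes backwards at least once in every order `f k`; if each `E`-edge goes
backwards in at most `c` of the orders, the walk must therefore be long. -/
theorem card_le_length_mul_of_chain {β ι : Type*} [Fintype ι] [DecidableEq ι] [DecidableEq β]
    {E : β → β → Prop} (f : ι → β → ℕ) {c : ℝ}
    (hE : ∀ a b, E a b → (#{k | ¬ f k a < f k b} : ℝ) ≤ c)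
    {l : List β} (hl : l ≠ []) (h : Cycle.Chain E (l : Cycle β)) :
    (Fintype.card ι : ℝ) ≤ l.length * c := by
  set P := (l.zip (l.rotate 1)).toFinset
  have hzip : ∀ {r : β → β → Prop}, Cycle.Chain r (l : Cycle β) ↔ ∀ e ∈ P, r e.1 e.2 := by
    simp [P, Cycle.chain_coe_iff_forall₂_rotate, forall₂_iff_zip]
  have hback : ∀ k, ∃ e ∈ P, ¬ f k e.1 < f k e.2 := by
    intro k
    by_contra! hk
    have hchain := (Cycle.chain_map (r := (· < ·)) (f k)).2 (hzip.2 hk)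
    exact hl (by simpa using hchain.eq_nil_of_irrefl)
  calc (Fintype.card ι : ℝ) = #(Finset.univ : Finset ι) := by simp
    _ ≤ #(P.biUnion fun e => {k | ¬ f k e.1 < f k e.2}) := by
        gcongr
        intro k _
        obtain ⟨e, he, hk⟩ := hback k
        exact Finset.mem_biUnion.2 ⟨e, he, by simpa [not_lt] using hk⟩
    _ ≤ ∑ e ∈ P, (#{k | ¬ f k e.1 < f k e.2} : ℝ) := by exact_mod_cast Finset.card_biUnion_le
    _ ≤ #P * c := by
        simpa using Finset.sum_le_card_nsmul P _ c fun e he => hE _ _ (hzip.1 h e he)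
    _ ≤ l.length * c := by
        obtain ⟨e, he⟩ : P.Nonempty := by cases l <;> simp_all [P]
        have hc : 0 ≤ c := (Nat.cast_nonneg _).trans (hE _ _ (hzip.1 h e he))
        gcongr
        exact_mod_cast (toFinset_card_le _).trans (by simp)

section edgeRel

variable {n m : ℕ} {α : ℝ} {x : Fin m → List (Fin n)}

theorem edgeRel_iff_card_not_lt_le {a b : Fin n} :
    edgeRel n m α x a b ↔ (#{k | ¬ (x k).idxOf a < (x k).idxOf b} : ℝ) ≤ 2 * α * m := by
  have hsplit := Finset.card_filter_add_card_filter_not (s := Finset.univ)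
    (fun k => (x k).idxOf a < (x k).idxOf b)
  rw [Finset.card_univ, Fintype.card_fin] at hsplit
  have : (#{k | (x k).idxOf a < (x k).idxOf b} : ℝ) + #{k | ¬ (x k).idxOf a < (x k).idxOf b}
      = m := by exact_mod_cast hsplit
  unfold edgeRel
  constructor <;> intro <;> linarith

theorem edgeRel_of_idxOf_lt {xmed : List (Fin n)} {U : Fin m → Finset (Fin n)}
    (hx : ∀ k, (x k).Nodup) (halign : ∀ k, (xmed.filter (fun a => a ∉ U k)).Sublist (x k))
    {u v : Fin n} (hv : v ∈ xmed) (huv : xmed.idxOf u < xmed.idxOf v)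
    (hu_good : (#{k | u ∈ U k} : ℝ) ≤ α * m) (hv_good : (#{k | v ∈ U k} : ℝ) ≤ α * m) :
    edgeRel n m α x u v := by
  have hcover : ({k | ¬ (x k).idxOf u < (x k).idxOf v} : Finset (Fin m)) ⊆
      ({k | u ∈ U k ∨ v ∈ U k} : Finset (Fin m)) := by
    refine Finset.monotone_filter_right _ fun k _ hk => ?_
    by_contra! h
    exact hk (idxOf_lt_idxOf_of_filter_sublist (hx k) (halign k) hv huv
      (p := fun a => a ∉ U k) h.1 h.2)
  have hcard : (#{k | ¬ (x k).idxOf u < (x k).idxOf v} : ℝ) ≤ #{k | u ∈ U k} + #{k | v ∈ U k} := by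
    rw [Finset.filter_or] at hcover
    exact_mod_cast (Finset.card_le_card hcover).trans (Finset.card_union_le _ _)
  exact edgeRel_iff_card_not_lt_le.2 (by linarith)

end edgeRel

section IsCycle

variable {n : ℕ} {E : Fin n → Fin n → Prop} {C : List (Fin n)}

theorem isCycle_iff_chain : IsCycle E C ↔ C ≠ [] ∧ C.Nodup ∧ Cycle.Chain E (C : Cycle (Fin n)) := by
  refine ⟨fun ⟨hne, hnd, hch, hcl⟩ => ⟨hne, hnd, ?_⟩, fun ⟨hne, hnd, hch⟩ => ⟨hne, hnd, ?_⟩⟩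
  · rw [Cycle.chain_ne_nil _ hne, isChain_cons]
    refine ⟨fun y hy => ?_, hch⟩
    rw [head?_eq_some_head hne, Option.mem_some_iff] at hy
    exact hy ▸ hcl hne
  · rw [Cycle.chain_ne_nil _ hne, isChain_cons] at hch
    exact ⟨hch.2, fun h => hch.1 _ (by simp [head?_eq_some_head h])⟩

theorem IsCycle.of_isRotated {D : List (Fin n)} (hC : IsCycle E C) (h : C ~r D) : IsCycle E D := by
  rw [isCycle_iff_chain] at hC ⊢
  obtain ⟨hne, hnd, hch⟩ := hC
  exact ⟨fun hD => hne (isRotated_nil_iff.1 (hD ▸ h)), h.nodup_iff.1 hnd,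
    Cycle.coe_eq_coe.2 h ▸ hch⟩

theorem IsCycle.one_le_two_mul_length {m : ℕ} (hm : 0 < m) {α : ℝ} {x : Fin m → List (Fin n)}
    (hC : IsCycle (edgeRel n m α x) C) : 1 ≤ 2 * α * C.length := by
  obtain ⟨hne, -, hch⟩ := isCycle_iff_chain.1 hC
  have hm' : (0 : ℝ) < m := by exact_mod_cast hm
  have := card_le_length_mul_of_chain (fun k => (x k).idxOf)
    (fun _ _ => edgeRel_iff_card_not_lt_le.1) hne hch
  rw [Fintype.card_fin] at this
  nlinarith

/-- On a shortest cycle every chord is an edge of the cycle: an edge `p → q` with `q` further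
along would close a strictly shorter cycle from `q` back to `p`. -/
theorem IsCycle.eq_next_of_shortest (hC : IsCycle E C)
    (hshort : ∀ D, IsCycle E D → (∀ a ∈ D, a ∈ C) → C.length ≤ D.length)
    {p q : Fin n} (hp : p ∈ C) (hq : q ∈ C) (hpq : E p q) : q = C.next p hp := by
  obtain ⟨l₁, l₂, rfl⟩ := append_of_mem hp
  have hrot : l₁ ++ p :: l₂ ~r l₂ ++ l₁ ++ [p] := by
    simpa using isRotated_append (l := l₁ ++ [p]) (l' := l₂)
  have hD := hC.of_isRotated hrot
  obtain ⟨d₁, d₂, hd⟩ := append_of_mem (hrot.mem_iff.1 hq)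
  have hlast : (q :: d₂).getLast (cons_ne_nil q d₂) = p := by
    rw [← getLast_append_of_ne_nil (l := d₁) (by simp)]
    simp only [← hd, getLast_append_singleton]
  have hsub : IsCycle E (q :: d₂) := by
    rw [hd] at hD
    obtain ⟨-, hnd, hch, -⟩ := hD
    exact ⟨cons_ne_nil q d₂, hnd.sublist (sublist_append_right _ _),
      hch.suffix (suffix_append _ _), fun h => hlast ▸ hpq⟩
  have hd₁ : d₁ = [] := by
    have := hshort _ hsub fun a ha => hrot.mem_iff.2 (hd ▸ mem_append_right _ ha)
    rw [hrot.perm.length_eq, hd] at this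
    simp only [length_append, length_cons] at this
    exact length_eq_zero_iff.1 (by omega)
  rw [isRotated_next_eq hrot hC.2.1]
  subst hd₁
  simp only [nil_append] at hd
  have := next_getLast_eq_head (q :: d₂) (cons_ne_nil _ _) (hd ▸ hD.2.1)
  simp only [hlast, head_cons] at this
  simp only [hd]
  exact this.symm

/-- If the edges among the vertices satisfying `P` contain a transitive tournament, a shortest
cycle meets `P` at most twice: every such vertex other than the `f`-least one is its successor. -/
theorem IsCycle.card_filter_le_two_of_shortest (hC : IsCycle E C)
    (hshort : ∀ D, IsCycle E D → (∀ a ∈ D, a ∈ C) → C.length ≤ D.length)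
    {P : Fin n → Prop} [DecidablePred P] (f : Fin n → ℕ) (hf : Set.InjOn f {a | P a})
    (hE : ∀ u v, P u → P v → f u < f v → E u v) :
    #(C.toFinset.filter P) ≤ 2 := by
  set S := C.toFinset.filter P
  rcases S.eq_empty_or_nonempty with hS | hS
  · simp [hS]
  obtain ⟨u, hu, hmin⟩ := S.exists_min_image f hS
  rw [Finset.mem_filter, mem_toFinset] at hu
  calc #S ≤ #{u, C.next u hu.1} := Finset.card_le_card fun w hw => ?_
    _ ≤ 2 := Finset.card_le_two
  have hw' := hw
  rw [Finset.mem_filter, mem_toFinset] at hw'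
  rcases eq_or_ne w u with rfl | hwu
  · simp
  have hlt : f u < f w := (hmin w hw).lt_of_ne fun h => hwu (hf hw'.2 hu.2 h.symm)
  simp [hC.eq_next_of_shortest hshort hu.1 hw'.1 (hE u w hu.2 hw'.2 hlt)]

theorem IsCycle.card_filter_le_div_mul_card_filter_not {m : ℕ} (hm : 0 < m) {α : ℝ}
    (hα : α < 1 / 4) {x : Fin m → List (Fin n)} (hC : IsCycle (edgeRel n m α x) C)
    {p : Fin n → Prop} [DecidablePred p] (hp : #(C.toFinset.filter p) ≤ 2) :
    (#(C.toFinset.filter p) : ℝ) ≤ 4 * α / (1 - 4 * α) * #(C.toFinset.filter (¬ p ·)) := by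
  have hsplit : #(C.toFinset.filter p) + #(C.toFinset.filter (¬ p ·)) = C.length := by
    rw [Finset.card_filter_add_card_filter_not, toFinset_card_of_nodup hC.2.1]
  have hlen := hC.one_le_two_mul_length hm
  have hp' : (#(C.toFinset.filter p) : ℝ) ≤ 2 := by exact_mod_cast hp
  rw [← hsplit, Nat.cast_add] at hlen
  rw [div_mul_eq_mul_div, le_div_iff₀ (by linarith)]
  linarith

end IsCycle

theorem shortest_cycle_deletion_good_bound_general (n m : ℕ) (hm : 0 < m)
    (α : ℝ) (hα0 : 0 < α) (hα : α ≤ 1 / 10)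
    (x : Fin m → List (Fin n)) (hx : ∀ k, x k ~ List.finRange n)
    (xmed : List (Fin n)) (hmed : xmed ~ List.finRange n)
    (U : Fin m → Finset (Fin n))
    (halign : ∀ k, (xmed.filter (fun a => a ∉ U k)).Sublist (x k))
    (T : ℕ) (V : ℕ → Finset (Fin n))
    (cyc : ℕ → List (Fin n))
    (hcyc : ∀ t < T, IsCycle (edgeRel n m α x) (cyc t))
    (hmem : ∀ t < T, ∀ a ∈ cyc t, a ∈ V t)
    (hmin : ∀ t < T, ∀ C : List (Fin n), IsCycle (edgeRel n m α x) C →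
      (∀ a ∈ C, a ∈ V t) → (cyc t).length ≤ C.length)
    (hVsucc : ∀ t, V (t + 1) = V t \ (cyc t).toFinset) :
    (∀ t < T, ((cyc t).toFinset.filter
        (fun a => ((Finset.univ.filter (fun k => a ∈ U k)).card : ℝ) ≤ α * m)).card ≤ 2) ∧
    (∑ t ∈ Finset.range T, (((cyc t).toFinset.filter
        (fun a => ((Finset.univ.filter (fun k => a ∈ U k)).card : ℝ) ≤ α * m)).card : ℝ)) ≤
      4 * α / (1 - 4 * α) *
        ((Finset.univ.filter
          (fun a : Fin n => α * m <
            ((Finset.univ.filter (fun k => a ∈ U k)).card : ℝ))).card : ℝ) := by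
  have hidx_inj : Set.InjOn xmed.idxOf {a | (#{k | a ∈ U k} : ℝ) ≤ α * m} :=
    fun a _ b _ h => (idxOf_inj (hmed.mem_iff.2 (mem_finRange a))).1 h
  have hfew : ∀ t < T, #((cyc t).toFinset.filter (fun a => (#{k | a ∈ U k} : ℝ) ≤ α * m)) ≤ 2 :=
    fun t ht => (hcyc t ht).card_filter_le_two_of_shortest
      (fun D hD hDC => hmin t ht D hD fun a ha => hmem t ht a (hDC a ha)) xmed.idxOf hidx_inj
      fun u v hu hv huv => edgeRel_of_idxOf_lt (fun k => (hx k).nodup_iff.2 (nodup_finRange n))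
        halign (hmed.mem_iff.2 (mem_finRange v)) huv hu hv
  refine ⟨hfew, ?_⟩
  have hdisj := Finset.pairwiseDisjoint_range_of_eq_sdiff hVsucc
    fun t ht a ha => hmem t ht a (mem_toFinset.1 ha)
  calc _ ≤ ∑ t ∈ Finset.range T, 4 * α / (1 - 4 * α) *
        (#((cyc t).toFinset.filter (fun a => α * m < (#{k | a ∈ U k} : ℝ))) : ℝ) :=
      Finset.sum_le_sum fun t ht => by
        rw [Finset.mem_range] at ht
        simpa only [not_le] using (hcyc t ht).card_filter_le_div_mul_card_filter_not hm
          (by linarith) (hfew t ht)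
    _ ≤ _ := by
      rw [← Finset.mul_sum]
      gcongr
      · exact div_nonneg (by linarith) (by linarith)
      · exact_mod_cast Finset.sum_card_filter_le_of_pairwiseDisjoint hdisj _

/-- In the iterative shortest-cycle-deletion process on the alignment graph (parameter
`0 < α ≤ 1/10`), every deleted minimum-length cycle contains at most two good vertices
(a symbol is good if it is unaligned with the median in at most `αm` of the fixed
optimal alignments); consequently the total number of good vertices deleted over all
iterations is at most `(4α/(1−4α))·|Ḡ|`, where `Ḡ` is the set of bad symbols. -/
theorem shortest_cycle_deletion_good_bound (n m : ℕ) (hm : 0 < m)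
    (α : ℝ) (hα0 : 0 < α) (hα : α ≤ 1 / 10)
    (x : Fin m → List (Fin n)) (hx : ∀ k, x k ~ List.finRange n)
    (xmed : List (Fin n)) (hmed : xmed ~ List.finRange n)
    (U : Fin m → Finset (Fin n))
    (halign : ∀ k, (xmed.filter (fun a => a ∉ U k)).Sublist (x k))
    (T : ℕ) (V : ℕ → Finset (Fin n)) (hV0 : V 0 = Finset.univ)
    (cyc : ℕ → List (Fin n))
    (hcyc : ∀ t < T, IsCycle (edgeRel n m α x) (cyc t))
    (hmem : ∀ t < T, ∀ a ∈ cyc t, a ∈ V t)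
    (hmin : ∀ t < T, ∀ C : List (Fin n), IsCycle (edgeRel n m α x) C →
      (∀ a ∈ C, a ∈ V t) → (cyc t).length ≤ C.length)
    (hVsucc : ∀ t, V (t + 1) = V t \ (cyc t).toFinset) :
    (∀ t < T, ((cyc t).toFinset.filter
        (fun a => ((Finset.univ.filter (fun k => a ∈ U k)).card : ℝ) ≤ α * m)).card ≤ 2) ∧
    (∑ t ∈ Finset.range T, (((cyc t).toFinset.filter
        (fun a => ((Finset.univ.filter (fun k => a ∈ U k)).card : ℝ) ≤ α * m)).card : ℝ)) ≤
      4 * α / (1 - 4 * α) *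
        ((Finset.univ.filter
          (fun a : Fin n => α * m <
            ((Finset.univ.filter (fun k => a ∈ U k)).card : ℝ))).card : ℝ) :=
  shortest_cycle_deletion_good_bound_general n m hm α hα0 hα x hx xmed hmed U halign T V cyc hcyc
    hmem hmin hVsucc
end

section
/- For m permutations x_1, ..., x_m of [n], let x' be a length-n string minimizing Σ_{i∈[m]} Δ(y, x_i) over all y ∈ [n]^n, and let C be the total excess multiplicity of repeated symbols in x'. Then Σ_i Δ(x', x_i) ≥ 2mC (each repeated occurrence matches at most m/2 alignments and each missing symbol costs one deletion per string: Σ_i Δ(x',x_i) ≥ 2(m/2)C + mC = 2mC), so C ≤ (Σ_i Δ(x', x_i))/(2m); consequently the post-processed permutation x̃ obtained by deleting C excess occurrences and inserting the C missing symbols satisfies Σ_{i∈[m]} Δ(x̃, x_i) ≤ Σ_i Δ(x', x_i) + (m−1)C ≤ (3/2)·Σ_{i∈[m]} Δ(x', x_i). -/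
open List

/-!
Both parts rest on `Δ(x, y) = |x| + |y| - 2·LCS(x, y)`. A common subsequence of `x'` and a
permutation has no repeated symbol, so `LCS(x', x_i) ≤ n - C` and `Δ(x', x_i) ≥ 2C`.

For the second part fix longest common subsequences `l_i` of `x'` and `x_i`, and take two
occurrences of a repeated symbol `a` of `x'`. Each `l_i` contains `a` at most once, so it survives
the deletion of one of the two occurrences; deleting the occurrence needed by fewer `l_i`, and
dropping `a` from those, shortens the `l_i` by at most `m/2` in total. After `C` such deletions,
inserting the missing symbols only lengthens the string, so
`Σ_i Δ(x̃, x_i) ≤ Σ_i Δ(x', x_i) + mC`, and `2mC ≤ Σ_i Δ(x', x_i)` finishes.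
-/

section EditDistance

variable {α : Type*} {x y l : List α} {k : ℕ}

theorem editStep.symm (h : editStep x y) : editStep y x := by
  rcases h with ⟨a, u, v, hx, hy⟩ | ⟨a, u, v, hx, hy⟩
  exacts [Or.inr ⟨a, u, v, hy, hx⟩, Or.inl ⟨a, u, v, hy, hx⟩]

theorem editStep.cons (a : α) (h : editStep x y) : editStep (a :: x) (a :: y) := by
  rcases h with ⟨b, u, v, rfl, rfl⟩ | ⟨b, u, v, rfl, rfl⟩
  exacts [Or.inl ⟨b, a :: u, v, rfl, rfl⟩, Or.inr ⟨b, a :: u, v, rfl, rfl⟩]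

theorem editsTo.cons (a : α) : ∀ {k : ℕ} {x y : List α}, editsTo k x y →
    editsTo k (a :: x) (a :: y)
  | 0, _, _, h => congrArg (a :: ·) h
  | _ + 1, _, _, ⟨z, hs, ht⟩ => ⟨a :: z, hs.cons a, ht.cons a⟩

theorem editsTo.trans : ∀ {j k : ℕ} {x y z : List α}, editsTo j x y → editsTo k y z →
    editsTo (j + k) x z
  | 0, _, _, _, _, rfl, h => by rwa [Nat.zero_add]
  | _ + 1, _, _, _, _, ⟨w, hs, ht⟩, h => by rw [Nat.succ_add]; exact ⟨w, hs, ht.trans h⟩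

theorem editsTo.symm : ∀ {k : ℕ} {x y : List α}, editsTo k x y → editsTo k y x
  | 0, _, _, h => Eq.symm h
  | _ + 1, _, _, ⟨_, hs, ht⟩ => ht.symm.trans ⟨_, hs.symm, rfl⟩

theorem editsTo_of_sublist (h : l <+ x) : editsTo (x.length - l.length) x l := by
  induction h with
  | slnil => rfl
  | @cons l x a h ih =>
    rw [length_cons, Nat.sub_add_comm h.length_le]
    exact ⟨x, Or.inr ⟨a, [], x, rfl, rfl⟩, ih⟩
  | cons_cons a _ ih => simpa using ih.cons a

theorem editDist_le (h : editsTo k x y) : editDist x y ≤ k := Nat.sInf_le h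

theorem editsTo_editDist (x y : List α) : editsTo (editDist x y) x y :=
  Nat.sInf_mem (s := {k | editsTo k x y})
    ⟨_, (editsTo_of_sublist (nil_sublist x)).trans (editsTo_of_sublist (nil_sublist y)).symm⟩

theorem editDist_add_two_mul_length_le (hx : l <+ x) (hy : l <+ y) :
    editDist x y + 2 * l.length ≤ x.length + y.length := by
  have := editDist_le ((editsTo_of_sublist hx).trans (editsTo_of_sublist hy).symm)
  have := hx.length_le
  have := hy.length_le
  omega

theorem exists_sublist_length_le_succ_of_sublist_append_cons {u v : List α} {a : α}
    (h : l <+ u ++ a :: v) : ∃ l', l' <+ u ++ v ∧ l' <+ l ∧ l.length ≤ l'.length + 1 := by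
  obtain ⟨l₁, l₂, rfl, h₁, h₂⟩ := sublist_append_iff.1 h
  rcases sublist_cons_iff.1 h₂ with h₂ | ⟨r, rfl, hr⟩
  · exact ⟨l₁ ++ l₂, h₁.append h₂, .refl _, Nat.le_succ _⟩
  · exact ⟨l₁ ++ r, h₁.append hr, (sublist_cons_self a r).append_left l₁, by simp; omega⟩

theorem exists_common_sublist_of_editsTo : ∀ {k : ℕ} {x y : List α}, editsTo k x y →
    ∃ l, l <+ x ∧ l <+ y ∧ x.length + y.length ≤ k + 2 * l.length
  | 0, x, _, rfl => ⟨x, .refl x, .refl x, by omega⟩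
  | _ + 1, _, _, ⟨_, hs, ht⟩ => by
    obtain ⟨l, hlz, hly, hlen⟩ := exists_common_sublist_of_editsTo ht
    rcases hs with ⟨a, u, v, rfl, rfl⟩ | ⟨a, u, v, rfl, rfl⟩
    · obtain ⟨l', hl'x, hl'l, hl'len⟩ :=
        exists_sublist_length_le_succ_of_sublist_append_cons hlz
      refine ⟨l', hl'x, hl'l.trans hly, ?_⟩
      simp only [length_append, length_cons] at hlen ⊢
      omega
    · refine ⟨l, hlz.trans ((sublist_cons_self a v).append_left u), hly, ?_⟩
      simp only [length_append, length_cons] at hlen ⊢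
      omega

theorem exists_common_sublist_editDist (x y : List α) :
    ∃ l, l <+ x ∧ l <+ y ∧ x.length + y.length ≤ editDist x y + 2 * l.length :=
  exists_common_sublist_of_editsTo (editsTo_editDist x y)

end EditDistance

section Dedup

variable {α ι : Type*} [DecidableEq α] [Fintype ι] {a : α} {l u v w x : List α}

theorem List.Nodup.length_le_card_toFinset (hl : l.Nodup) (h : l ⊆ x) :
    l.length ≤ x.toFinset.card :=
  (card_toFinset x).symm ▸ (hl.subperm fun _ hb => mem_dedup.2 (h hb)).length_le

theorem exists_eq_append_cons_append_cons_of_not_nodup (h : ¬x.Nodup) :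
    ∃ a u v w, x = u ++ a :: (v ++ a :: w) := by
  obtain ⟨a, ha⟩ : ∃ a, [a, a] <+ x := by simpa [nodup_iff_sublist] using h
  obtain ⟨r₁, r₂, rfl, ha₁, ha₂⟩ := cons_sublist_iff.1 ha
  obtain ⟨u, v₁, rfl⟩ := append_of_mem ha₁
  obtain ⟨v₂, w, rfl⟩ := append_of_mem (singleton_sublist.1 ha₂)
  exact ⟨a, u, v₁ ++ v₂, w, by simp⟩

theorem List.Sublist.sublist_append_of_not_mem (hl : a ∉ l) (h : l <+ u ++ a :: v) :
    l <+ u ++ v := by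
  have := h.filter (fun b => b ≠ a)
  rw [filter_eq_self.2 fun b hb => by simpa using ne_of_mem_of_not_mem hb hl, filter_append,
    filter_cons_of_neg (by simp)] at this
  exact this.trans (filter_sublist.append filter_sublist)

theorem List.Nodup.sublist_or_sublist_of_sublist_append_cons_append_cons (hl : l.Nodup)
    (h : l <+ u ++ a :: (v ++ a :: w)) : l <+ u ++ (v ++ a :: w) ∨ l <+ u ++ a :: (v ++ w) := by
  obtain ⟨l₁, l₂, rfl, h₁, h₂⟩ := sublist_append_iff.1 h
  rcases sublist_cons_iff.1 h₂ with h₂ | ⟨r, rfl, hr⟩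
  · exact .inl (h₁.append h₂)
  · have har : a ∉ r := (nodup_cons.1 (hl.sublist (sublist_append_right l₁ _))).1
    exact .inr (h₁.append ((Sublist.sublist_append_of_not_mem har hr).cons_cons a))

theorem two_mul_card_filter_not_le_or {p q : ι → Prop} [DecidablePred p] [DecidablePred q]
    (h : ∀ i, p i ∨ q i) :
    2 * (Finset.univ.filter fun i => ¬p i).card ≤ Fintype.card ι ∨
      2 * (Finset.univ.filter fun i => ¬q i).card ≤ Fintype.card ι := by
  classical
  have hdisj : Disjoint (Finset.univ.filter fun i => ¬p i) (Finset.univ.filter fun i => ¬q i) :=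
    Finset.disjoint_filter.2 fun i _ hp hq => (h i).elim hp hq
  have := (Finset.card_union_of_disjoint hdisj).symm.trans_le (Finset.card_le_univ _)
  omega

theorem exists_sublists_of_sublist_append_cons (l : ι → List α) (hl : ∀ i, (l i).Nodup)
    (h : ∀ i, l i <+ u ++ a :: v) :
    ∃ l' : ι → List α, (∀ i, l' i <+ u ++ v ∧ l' i <+ l i) ∧
      ∑ i, (l i).length ≤
        ∑ i, (l' i).length + (Finset.univ.filter fun i => ¬l i <+ u ++ v).card := by
  refine ⟨fun i => if l i <+ u ++ v then l i else (l i).erase a, fun i => ?_, ?_⟩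
  · dsimp only
    split_ifs with hi
    · exact ⟨hi, .refl _⟩
    · exact ⟨((erase_sublist).trans (h i)).sublist_append_of_not_mem (hl i).not_mem_erase,
        erase_sublist⟩
  · rw [Finset.card_filter, ← Finset.sum_add_distrib]
    refine Finset.sum_le_sum fun i _ => ?_
    dsimp only
    split_ifs
    · simp
    · have := @le_length_erase _ _ _ a (l i)
      omega

theorem exists_sublists_of_not_nodup (l : ι → List α) (hl : ∀ i, (l i).Nodup)
    (hx : ¬x.Nodup) (h : ∀ i, l i <+ x) :
    ∃ (y : List α) (l' : ι → List α), y.length + 1 = x.length ∧ y.toFinset = x.toFinset ∧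
      (∀ i, l' i <+ y ∧ l' i <+ l i) ∧
      2 * ∑ i, (l i).length ≤ 2 * ∑ i, (l' i).length + Fintype.card ι := by
  obtain ⟨a, u, v, w, rfl⟩ := exists_eq_append_cons_append_cons_of_not_nodup hx
  obtain ⟨s, t, hst, hats, hcard⟩ : ∃ s t, u ++ a :: (v ++ a :: w) = s ++ a :: t ∧
      (a ∈ s ∨ a ∈ t) ∧
      2 * (Finset.univ.filter fun i => ¬l i <+ s ++ t).card ≤ Fintype.card ι := by
    rcases two_mul_card_filter_not_le_or fun i =>
      (hl i).sublist_or_sublist_of_sublist_append_cons_append_cons (h i) with hc | hc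
    · exact ⟨u, v ++ a :: w, rfl, by simp, hc⟩
    · exact ⟨u ++ a :: v, w, by simp, by simp, by simpa using hc⟩
  rw [hst] at h ⊢
  obtain ⟨l', hl', hsum⟩ := exists_sublists_of_sublist_append_cons l hl h
  refine ⟨s ++ t, l', by simp; omega, ?_, hl', by omega⟩
  ext b
  by_cases hb : b = a <;> simp [hb, hats]

theorem exists_nodup_sublists (x : List α) (l : ι → List α) (hl : ∀ i, (l i).Nodup)
    (h : ∀ i, l i <+ x) :
    ∃ (xd : List α) (l' : ι → List α), xd.Nodup ∧ (∀ i, l' i <+ xd ∧ l' i <+ l i) ∧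
      2 * ∑ i, (l i).length ≤
        2 * ∑ i, (l' i).length + Fintype.card ι * (x.length - x.toFinset.card) := by
  by_cases hx : x.Nodup
  · exact ⟨x, l, hx, fun i => ⟨h i, .refl _⟩, Nat.le_add_right _ _⟩
  obtain ⟨y, l₁, hlen, hfin, hl₁, hsum₁⟩ := exists_sublists_of_not_nodup l hl hx h
  obtain ⟨xd, l', hxd, hl', hsum'⟩ :=
    exists_nodup_sublists y l₁ (fun i => (hl i).sublist (hl₁ i).2) fun i => (hl₁ i).1
  refine ⟨xd, l', hxd, fun i => ⟨(hl' i).1, (hl' i).2.trans (hl₁ i).2⟩, ?_⟩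
  have hcard : x.toFinset.card ≤ y.length := hfin ▸ toFinset_card_le y
  rw [hfin] at hsum'
  rw [show x.length - x.toFinset.card = y.length - x.toFinset.card + 1 by omega, mul_add_one]
  omega
termination_by x.length

end Dedup

theorem m_strings_postprocess_bound_general (n m : ℕ) (x : Fin m → List (Fin n))
    (hx : ∀ i, x i ~ List.finRange n)
    (x' : List (Fin n)) (hlen : x'.length = n) :
    2 * m * (n - x'.toFinset.card) ≤ ∑ i, editDist x' (x i) ∧
    ∃ xt : List (Fin n), xt ~ List.finRange n ∧
      2 * ∑ i, editDist xt (x i) ≤ 3 * ∑ i, editDist x' (x i) := by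
  have hxlen : ∀ i, (x i).length = n := fun i => by simp [(hx i).length_eq]
  have hxnd : ∀ i, (x i).Nodup := fun i => (hx i).nodup_iff.2 (nodup_finRange n)
  choose L hLx' hLx hL using fun i => exists_common_sublist_editDist x' (x i)
  simp only [hlen, hxlen] at hL
  have hLnd : ∀ i, (L i).Nodup := fun i => (hxnd i).sublist (hLx i)
  have hLcard : ∀ i, (L i).length ≤ x'.toFinset.card :=
    fun i => (hLnd i).length_le_card_toFinset (hLx' i).subset
  have hexcess : 2 * m * (n - x'.toFinset.card) ≤ ∑ i, editDist x' (x i) := by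
    have := Finset.sum_le_sum fun i (_ : i ∈ Finset.univ) =>
      show 2 * (n - x'.toFinset.card) ≤ editDist x' (x i) by have := hL i; have := hLcard i; omega
    simpa [mul_assoc, mul_left_comm] using this
  refine ⟨hexcess, ?_⟩
  obtain ⟨xd, l', hxd, hl', hsum⟩ := exists_nodup_sublists x' L hLnd hLx'
  obtain ⟨xt, hxt, hxdxt⟩ := subperm_iff.1 (hxd.subperm fun a _ => mem_finRange a)
  have hxtlen : xt.length = n := by simp [hxt.length_eq]
  have hl'sum := Finset.sum_le_sum fun i (_ : i ∈ Finset.univ) =>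
    editDist_add_two_mul_length_le ((hl' i).1.trans hxdxt) ((hl' i).2.trans (hLx i))
  refine ⟨xt, hxt, ?_⟩
  have hLsum := Finset.sum_le_sum fun i (_ : i ∈ Finset.univ) => hL i
  simp only [Finset.sum_add_distrib, ← Finset.mul_sum, Finset.sum_const, Finset.card_univ,
    Fintype.card_fin, smul_eq_mul, hlen, hxlen, hxtlen] at hLsum hl'sum hsum
  linarith

/-- For `m` permutations of `[n]` and a length-`n` string `x'` minimizing the total
insert/delete edit distance over length-`n` strings, the total excess multiplicity
`C = n − |distinct symbols of x'|` satisfies `2mC ≤ Σ_i Δ(x', x_i)`; consequently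
there is a permutation `x̃` (obtained by deleting the `C` excess occurrences and
inserting the `C` missing symbols) with `Σ_i Δ(x̃, x_i) ≤ (3/2)·Σ_i Δ(x', x_i)`. -/
theorem m_strings_postprocess_bound (n m : ℕ) (x : Fin m → List (Fin n))
    (hx : ∀ i, x i ~ List.finRange n)
    (x' : List (Fin n)) (hlen : x'.length = n)
    (hmin : ∀ y : List (Fin n), y.length = n →
      ∑ i, editDist x' (x i) ≤ ∑ i, editDist y (x i)) :
    2 * m * (n - x'.toFinset.card) ≤ ∑ i, editDist x' (x i) ∧
    ∃ xt : List (Fin n), xt ~ List.finRange n ∧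
      2 * ∑ i, editDist xt (x i) ≤ 3 * ∑ i, editDist x' (x i) :=
  m_strings_postprocess_bound_general n m x hx x' hlen
end
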